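/- arXiv:2007.01162 — 3 statements merged into one kernel-verified Lean document; each statement's English description precedes it below -/
import Mathlib

section
/- If every loss f_i is twice continuously differentiable, then for any t ∈ ℝ and θ ∈ ℝ^d the Hessian of the t-tilted loss equals ∇²_{θθ} R̃(t;θ) = t·Σ_{i=1}^N w_i(t;θ)·(∇f_i(θ) − ∇_θR̃(t;θ))·(∇f_i(θ) − ∇_θR̃(t;θ))ᵀ + Σ_{i=1}^N w_i(t;θ)·∇²f_i(θ), where w_i(t;θ) = exp(t·f_i(θ)) / Σ_{j=1}^N exp(t·f_j(θ)). -/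
/-!
For `t ≠ 0`, `R̃(t;·) = (log Σⱼ exp (t fⱼ) - log N) / t`, so differentiating the log-sum-exp gives
`∇R̃ = Σᵢ wᵢ ∇fᵢ` with the softmax weights `wᵢ = exp (t fᵢ - log Σⱼ exp (t fⱼ))`; for `t = 0` the
same formula holds with the uniform weights `1/N = wᵢ(0)`. The exponential form of the weights
gives `∇wᵢ = t wᵢ (∇fᵢ - ∇R̃)`, and the product rule yields
`D(∇R̃) v = t Σᵢ wᵢ ⟪∇fᵢ - ∇R̃, v⟫ ∇fᵢ + Σᵢ wᵢ ∇²fᵢ v`. Since `Σᵢ wᵢ = 1`, the numbers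
`⟪∇fᵢ - ∇R̃, v⟫` have weighted mean zero, so `∇fᵢ` may be replaced by `∇fᵢ - ∇R̃` in the first sum.
-/

open Real Finset

/-- The `t`-tilted empirical loss: for `t ≠ 0`,
`R̃(t;θ) = (1/t) · log((1/N) · Σᵢ exp(t · fᵢ(θ)))`, and `R̃(0;θ) = (1/N) · Σᵢ fᵢ(θ)`. -/
noncomputable def tiltedLoss {d N : ℕ} (f : Fin N → EuclideanSpace ℝ (Fin d) → ℝ) (t : ℝ)
    (θ : EuclideanSpace ℝ (Fin d)) : ℝ :=
  if t = 0 then (1 / (N : ℝ)) * ∑ i, f i θ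
  else (1 / t) * Real.log ((1 / (N : ℝ)) * ∑ i, Real.exp (t * f i θ))

section Softmax

variable {ι E : Type*} [Fintype ι]

noncomputable def tiltedWeight (f : ι → E → ℝ) (t : ℝ) (i : ι) (x : E) : ℝ :=
  exp (t * f i x) / ∑ j, exp (t * f j x)

lemma sum_exp_pos [Nonempty ι] (a : ι → ℝ) : 0 < ∑ j, exp (a j) :=
  Finset.sum_pos (fun _ _ => exp_pos _) univ_nonempty

lemma sum_tiltedWeight [Nonempty ι] (f : ι → E → ℝ) (t : ℝ) (x : E) :
    ∑ i, tiltedWeight f t i x = 1 := by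
  simp only [tiltedWeight, ← Finset.sum_div]
  exact div_self (sum_exp_pos _).ne'

lemma tiltedWeight_zero (f : ι → E → ℝ) (i : ι) (x : E) :
    tiltedWeight f 0 i x = 1 / Fintype.card ι := by
  simp [tiltedWeight]

lemma tiltedWeight_eq_exp (f : ι → E → ℝ) (t : ℝ) (i : ι) (x : E) :
    tiltedWeight f t i x = exp (t * f i x - log (∑ j, exp (t * f j x))) := by
  have : Nonempty ι := ⟨i⟩
  rw [exp_sub, exp_log (sum_exp_pos _), tiltedWeight]

variable [NormedAddCommGroup E] [NormedSpace ℝ E] {f : ι → E → ℝ} {x : E}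

lemma hasFDerivAt_log_sum_exp [Nonempty ι] (hf : ∀ i, DifferentiableAt ℝ (f i) x) (t : ℝ) :
    HasFDerivAt (fun y => log (∑ j, exp (t * f j y)))
      (t • ∑ j, tiltedWeight f t j x • fderiv ℝ (f j) x) x := by
  have hsum := HasFDerivAt.fun_sum (u := univ) fun j _ => ((hf j).hasFDerivAt.const_mul t).exp
  refine (hsum.log (sum_exp_pos _).ne').congr_fderiv ?_
  simp only [tiltedWeight, smul_sum, smul_smul]
  refine sum_congr rfl fun j _ => ?_
  congr 1
  field_simp

lemma hasFDerivAt_tiltedWeight (hf : ∀ i, DifferentiableAt ℝ (f i) x) (t : ℝ) (i : ι) :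
    HasFDerivAt (tiltedWeight f t i)
      ((tiltedWeight f t i x * t) • (fderiv ℝ (f i) x - ∑ j, tiltedWeight f t j x • fderiv ℝ (f j) x))
      x := by
  have : Nonempty ι := ⟨i⟩
  have h := (((hf i).hasFDerivAt.const_mul t).fun_sub (hasFDerivAt_log_sum_exp hf t)).exp
  rw [← tiltedWeight_eq_exp] at h
  convert h using 1
  · exact funext fun y => tiltedWeight_eq_exp f t i y
  · rw [smul_sub, smul_sub, mul_smul, mul_smul]

variable {F : Type*} [NormedAddCommGroup F] [NormedSpace ℝ F]

lemma hasFDerivAt_sum_tiltedWeight_smul (hf : ∀ i, DifferentiableAt ℝ (f i) x) (t : ℝ)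
    {G : ι → E → F} {G' : ι → E →L[ℝ] F} (hG : ∀ i, HasFDerivAt (G i) (G' i) x) :
    HasFDerivAt (fun y => ∑ i, tiltedWeight f t i y • G i y)
      (∑ i, (tiltedWeight f t i x • G' i + ((tiltedWeight f t i x * t) •
        (fderiv ℝ (f i) x - ∑ j, tiltedWeight f t j x • fderiv ℝ (f j) x)).smulRight (G i x))) x :=
  HasFDerivAt.fun_sum fun i _ => (hasFDerivAt_tiltedWeight hf t i).smul (hG i)

end Softmax

lemma sum_smul_inner_sub_smul_sub {ι F : Type*} [NormedAddCommGroup F] [InnerProductSpace ℝ F]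
    (s : Finset ι) (w : ι → ℝ) (g : ι → F) (v : F) (hw : ∑ i ∈ s, w i = 1) :
    ∑ i ∈ s, w i • (inner ℝ (g i - ∑ j ∈ s, w j • g j) v • (g i - ∑ j ∈ s, w j • g j)) =
      ∑ i ∈ s, (w i * inner ℝ (g i - ∑ j ∈ s, w j • g j) v) • g i := by
  set m := ∑ j ∈ s, w j • g j with hm
  have hc : ∑ i ∈ s, w i * inner ℝ (g i - m) v = 0 := by
    simp only [← real_inner_smul_left, ← sum_inner, smul_sub, sum_sub_distrib, ← sum_smul, hw,
      one_smul, ← hm, sub_self, inner_zero_left]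
  simp only [smul_sub, smul_smul, sum_sub_distrib, ← sum_smul, hc, zero_smul, sub_zero]

lemma ContDiff.differentiable_gradient {F : Type*} [NormedAddCommGroup F] [InnerProductSpace ℝ F]
    [CompleteSpace F] {f : F → ℝ} (hf : ContDiff ℝ 2 f) : Differentiable ℝ (gradient f) :=
  (InnerProductSpace.toDual ℝ F).symm.toContinuousLinearEquiv.differentiable.comp
    ((hf.fderiv_right (m := 1) le_rfl).differentiable one_ne_zero)

section Gradient

variable {ι F : Type*} [Fintype ι] [NormedAddCommGroup F] [InnerProductSpace ℝ F] [CompleteSpace F]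
  {f : ι → F → ℝ} {x : F}

lemma fderiv_sum_tiltedWeight_smul_gradient_apply [Nonempty ι] (hf : ∀ i, DifferentiableAt ℝ (f i) x)
    (hg : ∀ i, DifferentiableAt ℝ (gradient (f i)) x) (t : ℝ) (v : F) :
    fderiv ℝ (fun y => ∑ i, tiltedWeight f t i y • gradient (f i) y) x v =
      t • ∑ i, tiltedWeight f t i x •
          (inner ℝ (gradient (f i) x - ∑ j, tiltedWeight f t j x • gradient (f j) x) v •
            (gradient (f i) x - ∑ j, tiltedWeight f t j x • gradient (f j) x)) +
        ∑ i, tiltedWeight f t i x • fderiv ℝ (gradient (f i)) x v := by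
  rw [(hasFDerivAt_sum_tiltedWeight_smul hf t fun i => (hg i).hasFDerivAt).fderiv]
  simp only [_root_.sum_apply, add_apply, smul_apply, ContinuousLinearMap.smulRight_apply,
    sub_apply, smul_eq_mul, ← inner_gradient_left, ← real_inner_smul_left, ← sum_inner,
    ← inner_sub_left]
  rw [sum_add_distrib, add_comm, sum_smul_inner_sub_smul_sub _ _ _ _ (sum_tiltedWeight f t x),
    smul_sum]
  congr 1
  refine sum_congr rfl fun i _ => ?_
  rw [real_inner_smul_left, smul_smul]
  ring_nf

end Gradient

section TiltedLoss

variable {d N : ℕ} {f : Fin N → EuclideanSpace ℝ (Fin d) → ℝ} {x : EuclideanSpace ℝ (Fin d)}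

lemma hasFDerivAt_tiltedLoss (hN : 0 < N) (hf : ∀ i, DifferentiableAt ℝ (f i) x) (t : ℝ) :
    HasFDerivAt (tiltedLoss f t) (∑ i, tiltedWeight f t i x • fderiv ℝ (f i) x) x := by
  have : Nonempty (Fin N) := Fin.pos_iff_nonempty.mp hN
  rcases eq_or_ne t 0 with rfl | ht
  · have hmean : tiltedLoss f 0 = fun y => (1 / (N : ℝ)) * ∑ i, f i y :=
      funext fun y => if_pos rfl
    rw [hmean]
    refine ((HasFDerivAt.fun_sum fun i _ => (hf i).hasFDerivAt).const_mul _).congr_fderiv ?_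
    simp [tiltedWeight_zero, smul_sum]
  · have hlse : tiltedLoss f t = fun y => (1 / t) * (log (∑ j, exp (t * f j y)) - log N) := by
      funext y
      rw [tiltedLoss, if_neg ht]
      congr 1
      rw [one_div_mul_eq_div, log_div (sum_exp_pos _).ne' (Nat.cast_ne_zero.2 hN.ne')]
    rw [hlse]
    refine (((hasFDerivAt_log_sum_exp hf t).sub_const _).const_mul _).congr_fderiv ?_
    rw [smul_smul, one_div, inv_mul_cancel₀ ht, one_smul]

lemma gradient_tiltedLoss (hN : 0 < N) (hf : ∀ i, DifferentiableAt ℝ (f i) x) (t : ℝ) :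
    gradient (tiltedLoss f t) x = ∑ i, tiltedWeight f t i x • gradient (f i) x := by
  rw [gradient, (hasFDerivAt_tiltedLoss hN hf t).fderiv, map_sum]
  simp only [map_smul, gradient]

end TiltedLoss

/-- **Tilted Hessian.** If every loss `fᵢ` is twice continuously differentiable, then for any
`t` and `θ` the Hessian of the tilted loss (as a bilinear form applied to a direction `v`)
equals
`t·Σᵢ wᵢ·(∇fᵢ(θ) − ∇R̃(t;θ))(∇fᵢ(θ) − ∇R̃(t;θ))ᵀ v + Σᵢ wᵢ·∇²fᵢ(θ) v`,
where `wᵢ = exp(t·fᵢ(θ)) / Σⱼ exp(t·fⱼ(θ))` and the rank-one matrix `x xᵀ` acts on `v` as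
`⟨x, v⟩ • x`. -/
theorem tilted_hessian {d N : ℕ} (hN : 0 < N)
    (f : Fin N → EuclideanSpace ℝ (Fin d) → ℝ)
    (hf : ∀ i, ContDiff ℝ 2 (f i))
    (t : ℝ) (θ : EuclideanSpace ℝ (Fin d))
    (w : Fin N → ℝ)
    (hw : ∀ i, w i = Real.exp (t * f i θ) / ∑ j, Real.exp (t * f j θ)) :
    DifferentiableAt ℝ (fun x => gradient (tiltedLoss f t) x) θ ∧
    ∀ v : EuclideanSpace ℝ (Fin d),
      fderiv ℝ (fun x => gradient (tiltedLoss f t) x) θ v =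
        t • (∑ i, w i •
          ((inner ℝ (gradient (f i) θ - gradient (tiltedLoss f t) θ) v : ℝ) •
            (gradient (f i) θ - gradient (tiltedLoss f t) θ)))
        + ∑ i, w i • fderiv ℝ (fun x => gradient (f i) x) θ v := by
  have : Nonempty (Fin N) := Fin.pos_iff_nonempty.mp hN
  have hd : ∀ i, Differentiable ℝ (f i) := fun i => (hf i).differentiable two_ne_zero
  have hg : ∀ i, DifferentiableAt ℝ (gradient (f i)) θ := fun i =>
    (hf i).differentiable_gradient θ
  have hgrad : (fun x => gradient (tiltedLoss f t) x) =
      fun x => ∑ i, tiltedWeight f t i x • gradient (f i) x :=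
    funext fun x => gradient_tiltedLoss hN (fun i => hd i x) t
  obtain rfl : w = fun i => tiltedWeight f t i θ := funext hw
  refine ⟨hgrad ▸ (hasFDerivAt_sum_tiltedWeight_smul (fun i => hd i θ) t
    fun i => (hg i).hasFDerivAt).differentiableAt, fun v => ?_⟩
  rw [hgrad, fderiv_sum_tiltedWeight_smul_gradient_apply (fun i => hd i θ) hg,
    gradient_tiltedLoss hN (fun i => hd i θ)]
end

section
/- Suppose every loss f_i is twice continuously differentiable and there exists β_max > 0 such that ∇²f_i(θ) ⪯ β_max·I for all i ∈ [N] and all θ ∈ ℝ^d. Then for every t < 0 and every θ ∈ ℝ^d, the Hessian of the t-tilted loss satisfies ∇²_{θθ} R̃(t;θ) ⪯ β_max·I; equivalently, the largest eigenvalue of ∇²_{θθ} R̃(t;θ) is at most β_max, so R̃(t;·) is β_max-smooth for negative tilts. -/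
/-!
Restrict to a line `s ↦ θ + s • v` and write `φᵢ(s) = fᵢ(θ + s • v)`. The tilted loss becomes
`g(s) = t⁻¹ log (N⁻¹ ∑ exp (t φᵢ))`, whose derivative is the softmax mean `∑ φᵢ' eᵢ / ∑ eᵢ` with
weights `eᵢ = exp (t φᵢ)`. Differentiating once more gives the `e`-weighted mean of the `φᵢ''`
plus `t` times the `e`-weighted variance of the `φᵢ'`. For `t < 0` the variance term is
nonpositive, so `g''` is at most the largest `φᵢ'' ≤ βmax ‖v‖²`.
-/

open Real Finset

open InnerProductSpace in
theorem inner_fderiv_gradient_apply {E : Type*} [NormedAddCommGroup E] [InnerProductSpace ℝ E]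
    [CompleteSpace E] (F : E → ℝ) (x v : E) :
    inner ℝ v (fderiv ℝ (gradient F) x v) = fderiv ℝ (fderiv ℝ F) x v v := by
  change inner ℝ v (fderiv ℝ ((toDual ℝ E).symm ∘ fderiv ℝ F) x v) = _
  rw [LinearIsometryEquiv.comp_fderiv, real_inner_comm]
  exact toDual_symm_apply

section LineRestriction

variable {E G : Type*} [NormedAddCommGroup E] [NormedSpace ℝ E] [NormedAddCommGroup G]
  [NormedSpace ℝ G] {x v : E} {s : ℝ}

theorem hasDerivAt_comp_add_smul {g : E → G} (hg : DifferentiableAt ℝ g (x + s • v)) :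
    HasDerivAt (fun u : ℝ => g (x + u • v)) (fderiv ℝ g (x + s • v) v) s :=
  hg.hasFDerivAt.comp_hasDerivAt s (by simpa using ((hasDerivAt_id s).smul_const v).const_add x)

theorem hasDerivAt_fderiv_comp_add_smul_apply {g : E → G}
    (hg : DifferentiableAt ℝ (fderiv ℝ g) (x + s • v)) :
    HasDerivAt (fun u : ℝ => fderiv ℝ g (x + u • v) v)
      (fderiv ℝ (fderiv ℝ g) (x + s • v) v v) s := by
  simpa using (hasDerivAt_comp_add_smul hg).clm_apply (hasDerivAt_const s v)

theorem ContDiff.differentiable_fderiv {g : E → G} {n : WithTop ℕ∞} (hg : ContDiff ℝ n g)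
    (hn : 2 ≤ n) : Differentiable ℝ (fderiv ℝ g) :=
  (hg.fderiv_right (m := 1) hn).differentiable one_ne_zero

end LineRestriction

section Softmax

variable {ι : Type*} [Fintype ι]

theorem sum_mul_sq_le_sum_sq_mul_mul_sum {a e : ι → ℝ} (he : ∀ i, 0 ≤ e i) :
    (∑ i, a i * e i) ^ 2 ≤ (∑ i, a i ^ 2 * e i) * ∑ i, e i :=
  sum_sq_le_sum_mul_sum_of_sq_le_mul _ (fun i _ => mul_nonneg (sq_nonneg _) (he i))
    (fun i _ => he i) (fun i _ => le_of_eq (by ring))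

variable [Nonempty ι]

theorem hasDerivAt_log_sum_exp {φ : ι → ℝ → ℝ} {φ' : ι → ℝ} {t c s : ℝ} (ht : t ≠ 0) (hc : 0 < c)
    (hφ : ∀ i, HasDerivAt (φ i) (φ' i) s) :
    HasDerivAt (fun u => (1 / t) * log (c * ∑ i, exp (t * φ i u)))
      ((∑ i, φ' i * exp (t * φ i s)) / ∑ i, exp (t * φ i s)) s := by
  have hS : 0 < ∑ i, exp (t * φ i s) := sum_pos (fun i _ => exp_pos _) univ_nonempty
  have := (((HasDerivAt.fun_sum fun i _ => ((hφ i).const_mul t).exp).const_mul c).log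
    (by positivity)).const_mul (1 / t)
  refine this.congr_deriv ?_
  have : ∑ i, exp (t * φ i s) * (t * φ' i) = t * ∑ i, φ' i * exp (t * φ i s) := by
    rw [mul_sum]; exact sum_congr rfl fun i _ => by ring
  rw [this]
  field_simp

/-- The quotient-rule derivative of `s ↦ (∑ aᵢ eᵢ) / ∑ eᵢ` when `aᵢ' = bᵢ` and `eᵢ' = t aᵢ eᵢ`:
the `e`-weighted mean of `b` plus `t` times the `e`-weighted variance of `a`. -/
theorem softmax_mean_deriv_le {a b e : ι → ℝ} {t C : ℝ} (ht : t ≤ 0) (he : ∀ i, 0 < e i)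
    (hb : ∀ i, b i ≤ C) :
    ((∑ i, (b i * e i + a i * (e i * (t * a i)))) * (∑ i, e i) -
      (∑ i, a i * e i) * ∑ i, e i * (t * a i)) / (∑ i, e i) ^ 2 ≤ C := by
  have hS : 0 < ∑ i, e i := sum_pos (fun i _ => he i) univ_nonempty
  have hnum : ∑ i, (b i * e i + a i * (e i * (t * a i))) =
      ∑ i, b i * e i + t * ∑ i, a i ^ 2 * e i := by
    rw [sum_add_distrib, mul_sum]
    exact congrArg _ (sum_congr rfl fun i _ => by ring)
  have hden : ∑ i, e i * (t * a i) = t * ∑ i, a i * e i := by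
    rw [mul_sum]
    exact sum_congr rfl fun i _ => by ring
  have hbe : ∑ i, b i * e i ≤ C * ∑ i, e i := by
    rw [mul_sum]
    exact sum_le_sum fun i _ => mul_le_mul_of_nonneg_right (hb i) (he i).le
  have hvar := sum_mul_sq_le_sum_sq_mul_mul_sum (a := a) fun i => (he i).le
  rw [hnum, hden, div_le_iff₀ (by positivity)]
  nlinarith [mul_le_mul_of_nonneg_right hbe hS.le,
    mul_nonpos_of_nonpos_of_nonneg ht (sub_nonneg.2 hvar)]

theorem le_of_hasDerivAt_softmax_mean {φ a : ι → ℝ → ℝ} {b : ι → ℝ} {t s C D : ℝ} (ht : t ≤ 0)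
    (hφ : ∀ i, HasDerivAt (φ i) (a i s) s) (ha : ∀ i, HasDerivAt (a i) (b i) s)
    (hb : ∀ i, b i ≤ C)
    (hD : HasDerivAt (fun u => (∑ i, a i u * exp (t * φ i u)) / ∑ i, exp (t * φ i u)) D s) :
    D ≤ C := by
  have he i : HasDerivAt (fun u => exp (t * φ i u)) (exp (t * φ i s) * (t * a i s)) s :=
    ((hφ i).const_mul t).exp
  have hS : ∑ i, exp (t * φ i s) ≠ 0 := (sum_pos (fun i _ => exp_pos _) univ_nonempty).ne'
  rw [hD.unique ((HasDerivAt.fun_sum fun i _ => (ha i).mul (he i)).div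
    (HasDerivAt.fun_sum fun i _ => he i) hS)]
  exact softmax_mean_deriv_le ht (fun i => exp_pos _) hb

end Softmax

theorem tiltedLoss_of_ne_zero {d N : ℕ} (f : Fin N → EuclideanSpace ℝ (Fin d) → ℝ) {t : ℝ}
    (ht : t ≠ 0) :
    tiltedLoss f t = fun θ => (1 / t) * log ((1 / (N : ℝ)) * ∑ i, exp (t * f i θ)) := by
  ext θ
  exact if_neg ht

theorem contDiff_tiltedLoss {d N : ℕ} [NeZero N] {f : Fin N → EuclideanSpace ℝ (Fin d) → ℝ}
    {n : WithTop ℕ∞} (hf : ∀ i, ContDiff ℝ n (f i)) (t : ℝ) : ContDiff ℝ n (tiltedLoss f t) := by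
  by_cases ht : t = 0
  · subst ht
    unfold tiltedLoss
    simp only [if_true]
    exact contDiff_const.mul (ContDiff.sum fun i _ => hf i)
  rw [tiltedLoss_of_ne_zero f ht]
  refine contDiff_const.mul (ContDiff.log ?_ fun θ => ?_)
  · exact contDiff_const.mul (ContDiff.sum fun i _ => (contDiff_const.mul (hf i)).exp)
  · exact mul_ne_zero (by simp [NeZero.ne N]) (sum_pos (fun i _ => exp_pos _) univ_nonempty).ne'

theorem tilted_smooth_neg_tilt_general {d N : ℕ} (hN : 0 < N)
    (f : Fin N → EuclideanSpace ℝ (Fin d) → ℝ)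
    (hf : ∀ i, ContDiff ℝ 2 (f i))
    (βmax : ℝ)
    (hess_ub : ∀ (i : Fin N) (θ v : EuclideanSpace ℝ (Fin d)),
      (inner ℝ v (fderiv ℝ (fun x => gradient (f i) x) θ v) : ℝ) ≤ βmax * ‖v‖ ^ 2)
    (t : ℝ) (ht : t < 0) :
    ∀ θ v : EuclideanSpace ℝ (Fin d),
      (inner ℝ v (fderiv ℝ (fun x => gradient (tiltedLoss f t) x) θ v) : ℝ) ≤ βmax * ‖v‖ ^ 2 := by
  intro θ v
  have : NeZero N := ⟨hN.ne'⟩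
  have hR := contDiff_tiltedLoss hf t
  have hf_diff i x := (hf i).differentiable two_ne_zero x
  have hf_fderiv_diff i x := (hf i).differentiable_fderiv le_rfl x
  have hR_line (s : ℝ) : fderiv ℝ (tiltedLoss f t) (θ + s • v) v =
      (∑ i, fderiv ℝ (f i) (θ + s • v) v * exp (t * f i (θ + s • v))) /
        ∑ i, exp (t * f i (θ + s • v)) := by
    refine (hasDerivAt_comp_add_smul (hR.differentiable two_ne_zero _)).unique ?_
    rw [tiltedLoss_of_ne_zero f ht.ne]
    exact hasDerivAt_log_sum_exp ht.ne (by positivity)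
      fun i => hasDerivAt_comp_add_smul (hf_diff i _)
  rw [inner_fderiv_gradient_apply]
  refine le_of_hasDerivAt_softmax_mean (φ := fun i s => f i (θ + s • v))
    (a := fun i s => fderiv ℝ (f i) (θ + s • v) v) (s := 0) ht.le
    (fun i => hasDerivAt_comp_add_smul (hf_diff i _))
    (fun i => hasDerivAt_fderiv_comp_add_smul_apply (hf_fderiv_diff i _)) (fun i => ?_) ?_
  · rw [← inner_fderiv_gradient_apply]
    exact hess_ub i _ v
  · simpa only [← funext hR_line, zero_smul, add_zero] using
      hasDerivAt_fderiv_comp_add_smul_apply (x := θ) (v := v) (s := 0)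
        (hR.differentiable_fderiv le_rfl _)

/-- **Smoothness of the tilted loss for negative tilts.** Suppose every `fᵢ` is twice
continuously differentiable with `∇²fᵢ(θ) ⪯ βmax·I` for all `i` and `θ` (expressed as the
quadratic-form upper bound `⟨v, ∇²fᵢ(θ) v⟩ ≤ βmax·‖v‖²`), where `βmax > 0`. Then for every
`t < 0` and every `θ`, the Hessian of the tilted loss satisfies `∇² R̃(t;θ) ⪯ βmax·I`, i.e.
its largest eigenvalue is at most `βmax`, so `R̃(t;·)` is `βmax`-smooth for negative tilts. -/
theorem tilted_smooth_neg_tilt {d N : ℕ} (hN : 0 < N)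
    (f : Fin N → EuclideanSpace ℝ (Fin d) → ℝ)
    (hf : ∀ i, ContDiff ℝ 2 (f i))
    (βmax : ℝ) (hβ : 0 < βmax)
    (hess_ub : ∀ (i : Fin N) (θ v : EuclideanSpace ℝ (Fin d)),
      (inner ℝ v (fderiv ℝ (fun x => gradient (f i) x) θ v) : ℝ) ≤ βmax * ‖v‖ ^ 2)
    (t : ℝ) (ht : t < 0) :
    ∀ θ v : EuclideanSpace ℝ (Fin d),
      (inner ℝ v (fderiv ℝ (fun x => gradient (tiltedLoss f t) x) θ v) : ℝ) ≤ βmax * ‖v‖ ^ 2 :=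
  tilted_smooth_neg_tilt_general hN f hf βmax hess_ub t ht
end

section
/- In the GLM setting, let θ̆ : ℝ → ℝ^d be a differentiable curve of stationary solutions, i.e. ∇A(θ̆(τ)) = M(τ; θ̆(τ)) for all τ, with H(τ) := ∇²A(θ̆(τ)) + τ·V(τ; θ̆(τ)) invertible for each τ. Then for every t ≠ 0 and every τ ∈ ℝ, the derivative of the t-tilted loss along the solution path satisfies d/dτ [R̃(t; θ̆(τ))] = θ̆(τ)ᵀ · V(τ; θ̆(τ)) · H(τ)^{-1} · (∫_t^τ V(ν; θ̆(τ)) dν) · θ̆(τ); in particular this derivative vanishes at τ = t. -/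
open Real Finset MeasureTheory intervalIntegral

/-- Empirical log-partition function `Γ(t;θ) = log((1/N)·Σᵢ exp(−t·⟨θ,Tᵢ⟩))`. -/
noncomputable def glmGamma {d N : ℕ} (T : Fin N → EuclideanSpace ℝ (Fin d)) (t : ℝ)
    (θ : EuclideanSpace ℝ (Fin d)) : ℝ :=
  Real.log ((1 / (N : ℝ)) * ∑ i, Real.exp (-t * (inner ℝ θ (T i) : ℝ)))

/-- Tilted empirical mean `M(t;θ) = (1/N)·Σᵢ Tᵢ·exp(−t·⟨θ,Tᵢ⟩ − Γ(t;θ))`. -/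
noncomputable def glmM {d N : ℕ} (T : Fin N → EuclideanSpace ℝ (Fin d)) (t : ℝ)
    (θ : EuclideanSpace ℝ (Fin d)) : EuclideanSpace ℝ (Fin d) :=
  ∑ i, ((1 / (N : ℝ)) * Real.exp (-t * (inner ℝ θ (T i) : ℝ) - glmGamma T t θ)) • T i

/-- Tilted empirical covariance `V(t;θ)` of the sufficient statistic, as a linear operator. -/
noncomputable def glmV {d N : ℕ} (T : Fin N → EuclideanSpace ℝ (Fin d)) (t : ℝ)
    (θ : EuclideanSpace ℝ (Fin d)) :
    EuclideanSpace ℝ (Fin d) →L[ℝ] EuclideanSpace ℝ (Fin d) :=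
  ∑ i, ((1 / (N : ℝ)) * Real.exp (-t * (inner ℝ θ (T i) : ℝ) - glmGamma T t θ)) •
    ((innerSL ℝ (T i - glmM T t θ)).smulRight (T i - glmM T t θ))

/-- The `t`-tilted GLM loss for `t ≠ 0`:
`R̃(t;θ) = (1/t)·log((1/N)·Σᵢ exp(t·(A(θ) − ⟨θ,Tᵢ⟩)))`. -/
noncomputable def glmTiltedLoss {d N : ℕ} (T : Fin N → EuclideanSpace ℝ (Fin d))
    (A : EuclideanSpace ℝ (Fin d) → ℝ) (t : ℝ) (θ : EuclideanSpace ℝ (Fin d)) : ℝ :=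
  (1 / t) * Real.log ((1 / (N : ℝ)) * ∑ i, Real.exp (t * (A θ - (inner ℝ θ (T i) : ℝ))))

/-!
All tilted quantities depend on `(t, θ)` only through `u = t • θ`: with the log-partition function
`K(u) = log((1/N) Σᵢ exp(-⟪u, Tᵢ⟫))` one has `Γ(t;θ) = K(tθ)`, `M(t;θ) = -∇K(tθ)` and
`V(t;θ) = ∇²K(tθ)`. Hence `∂ₜ M(t;θ) = -V(t;θ) θ`, so `∫_t^τ V(ν;θ) θ dν = M(t;θ) - M(τ;θ)`, and
differentiating the stationarity equation `∇A(θ̆(τ)) = M(τ;θ̆(τ))` gives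
`H(τ) θ̆'(τ) = -V(τ;θ̆(τ)) θ̆(τ)`.
Since `R̃(t;θ) = A(θ) + Γ(t;θ)/t`, the chain rule gives
`d/dτ R̃(t;θ̆(τ)) = ⟪∇A(θ̆(τ)) - M(t;θ̆(τ)), θ̆'(τ)⟫ = ⟪M(τ;θ̆(τ)) - M(t;θ̆(τ)), θ̆'(τ)⟫`,
and the formula follows from the symmetry of `V` and of `H⁻¹`.
-/

open scoped RealInnerProductSpace

section InnerProductSpace

variable {E : Type*} [NormedAddCommGroup E] [InnerProductSpace ℝ E]

theorem LinearMap.IsSymmetric.of_rightInverse {H G : E →ₗ[ℝ] E} (hH : H.IsSymmetric)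
    (hHG : Function.RightInverse G H) : G.IsSymmetric := fun u v => by
  calc ⟪G u, v⟫ = ⟪G u, H (G v)⟫ := by rw [hHG v]
    _ = ⟪H (G u), G v⟫ := (hH _ _).symm
    _ = ⟪u, G v⟫ := by rw [hHG u]

variable [CompleteSpace E]

theorem isSymmetric_fderiv_gradient {A : E → ℝ} {x : E} (hA : ContDiffAt ℝ 2 A x) :
    (fderiv ℝ (gradient A) x : E →ₗ[ℝ] E).IsSymmetric := by
  have hgrad : gradient A = (InnerProductSpace.toDual ℝ E).symm ∘ fderiv ℝ A := rfl
  have hD2 : ∀ u v, ⟪fderiv ℝ (gradient A) x u, v⟫ = fderiv ℝ (fderiv ℝ A) x u v := by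
    intro u v
    rw [hgrad, LinearIsometryEquiv.comp_fderiv]
    exact InnerProductSpace.toDual_symm_apply
  intro u v
  rw [ContinuousLinearMap.coe_coe, real_inner_comm _ u, hD2, hD2]
  exact hA.isSymmSndFDerivAt (by simp) u v

theorem ContDiffAt.differentiableAt_gradient {A : E → ℝ} {x : E} (hA : ContDiffAt ℝ 2 A x) :
    DifferentiableAt ℝ (gradient A) x :=
  (InnerProductSpace.toDual ℝ E).symm.differentiableAt.comp x
    ((hA.fderiv_right (m := 1) le_rfl).differentiableAt one_ne_zero)

end InnerProductSpace

section Tilting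

noncomputable def glmWeight {d N : ℕ} (T : Fin N → EuclideanSpace ℝ (Fin d)) (t : ℝ)
    (θ : EuclideanSpace ℝ (Fin d)) (i : Fin N) : ℝ :=
  (1 / (N : ℝ)) * Real.exp (-t * ⟪θ, T i⟫ - glmGamma T t θ)

variable {d N : ℕ} {T : Fin N → EuclideanSpace ℝ (Fin d)}

theorem glmM_eq_sum (t : ℝ) (θ : EuclideanSpace ℝ (Fin d)) :
    glmM T t θ = ∑ i, glmWeight T t θ i • T i := rfl

theorem glmV_apply (t : ℝ) (θ v : EuclideanSpace ℝ (Fin d)) :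
    glmV T t θ v = ∑ i, (glmWeight T t θ i * ⟪T i - glmM T t θ, v⟫) • (T i - glmM T t θ) := by
  simp only [glmV, glmWeight, FunLike.coe_sum, Finset.sum_apply, FunLike.coe_smul, Pi.smul_apply,
    ContinuousLinearMap.smulRight_apply, innerSL_apply_apply, smul_smul]

theorem isSymmetric_glmV (t : ℝ) (θ : EuclideanSpace ℝ (Fin d)) :
    (glmV T t θ : EuclideanSpace ℝ (Fin d) →ₗ[ℝ] EuclideanSpace ℝ (Fin d)).IsSymmetric := by
  intro u v
  simp only [ContinuousLinearMap.coe_coe, glmV_apply, sum_inner, inner_sum, real_inner_smul_left,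
    real_inner_smul_right, real_inner_comm u]
  exact Finset.sum_congr rfl fun i _ => by ring

theorem inner_glmM (t : ℝ) (θ v : EuclideanSpace ℝ (Fin d)) :
    ⟪glmM T t θ, v⟫ = ∑ i, glmWeight T t θ i * ⟪T i, v⟫ := by
  simp only [glmM_eq_sum, sum_inner, real_inner_smul_left]

theorem glmPartition_pos (hN : 0 < N) (t : ℝ) (θ : EuclideanSpace ℝ (Fin d)) :
    0 < (1 / (N : ℝ)) * ∑ i, Real.exp (-t * ⟪θ, T i⟫) := by
  have : Nonempty (Fin N) := Fin.pos_iff_nonempty.mp hN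
  exact mul_pos (by positivity) (Finset.sum_pos (fun i _ => Real.exp_pos _) univ_nonempty)

theorem exp_glmGamma (hN : 0 < N) (t : ℝ) (θ : EuclideanSpace ℝ (Fin d)) :
    Real.exp (glmGamma T t θ) = (1 / (N : ℝ)) * ∑ i, Real.exp (-t * ⟪θ, T i⟫) :=
  Real.exp_log (glmPartition_pos hN t θ)

theorem glmWeight_eq_div (hN : 0 < N) (t : ℝ) (θ : EuclideanSpace ℝ (Fin d)) (i : Fin N) :
    glmWeight T t θ i =
      (1 / (N : ℝ)) * Real.exp (-t * ⟪θ, T i⟫) /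
        ((1 / (N : ℝ)) * ∑ j, Real.exp (-t * ⟪θ, T j⟫)) := by
  rw [glmWeight, Real.exp_sub, exp_glmGamma hN, mul_div_assoc]

theorem sum_glmWeight (hN : 0 < N) (t : ℝ) (θ : EuclideanSpace ℝ (Fin d)) :
    ∑ i, glmWeight T t θ i = 1 := by
  simp only [glmWeight_eq_div hN, ← Finset.sum_div, ← Finset.mul_sum]
  exact div_self (glmPartition_pos hN t θ).ne'

theorem glmV_apply_eq_sum (hN : 0 < N) (t : ℝ) (θ v : EuclideanSpace ℝ (Fin d)) :
    glmV T t θ v = ∑ i, (glmWeight T t θ i * ⟪T i - glmM T t θ, v⟫) • T i := by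
  have hcentered : ∑ i, glmWeight T t θ i * ⟪T i - glmM T t θ, v⟫ = 0 := by
    simp only [inner_sub_left, mul_sub, Finset.sum_sub_distrib, ← Finset.sum_mul,
      sum_glmWeight hN, one_mul, inner_glmM, sub_self]
  simp only [glmV_apply, smul_sub, Finset.sum_sub_distrib, ← Finset.sum_smul, hcentered,
    zero_smul, sub_zero]

theorem glmGamma_eq_one_smul (t : ℝ) (θ : EuclideanSpace ℝ (Fin d)) :
    glmGamma T t θ = glmGamma T 1 (t • θ) := by
  simp only [glmGamma, real_inner_smul_left, neg_mul, one_mul]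

theorem glmWeight_eq_one_smul (t : ℝ) (θ : EuclideanSpace ℝ (Fin d)) :
    glmWeight T t θ = glmWeight T 1 (t • θ) := by
  funext i
  rw [glmWeight, glmWeight, ← glmGamma_eq_one_smul, real_inner_smul_left, neg_one_mul, neg_mul]

theorem glmM_eq_one_smul (t : ℝ) (θ : EuclideanSpace ℝ (Fin d)) :
    glmM T t θ = glmM T 1 (t • θ) := by
  rw [glmM_eq_sum, glmM_eq_sum, glmWeight_eq_one_smul]

theorem glmV_eq_one_smul (t : ℝ) (θ : EuclideanSpace ℝ (Fin d)) :
    glmV T t θ = glmV T 1 (t • θ) := by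
  ext1 v
  rw [glmV_apply, glmV_apply, glmWeight_eq_one_smul, glmM_eq_one_smul]

end Tilting

section Derivatives

variable {d N : ℕ} {T : Fin N → EuclideanSpace ℝ (Fin d)} {u c : ℝ → EuclideanSpace ℝ (Fin d)}
  {u' c' : EuclideanSpace ℝ (Fin d)} {s : ℝ}

theorem HasDerivAt.neg_one_mul_inner_const (hu : HasDerivAt u u' s) (v : EuclideanSpace ℝ (Fin d)) :
    HasDerivAt (fun s => -1 * ⟪u s, v⟫) (-1 * ⟪u', v⟫) s := by
  simpa using (hu.inner ℝ (hasDerivAt_const s v)).const_mul (-1 : ℝ)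

theorem hasDerivAt_glmGamma_one_comp (hN : 0 < N) (hu : HasDerivAt u u' s) :
    HasDerivAt (fun s => glmGamma T 1 (u s)) (-⟪glmM T 1 (u s), u'⟫) s := by
  have hlog : HasDerivAt (fun s => glmGamma T 1 (u s)) _ s :=
    ((HasDerivAt.fun_sum fun i _ => (hu.neg_one_mul_inner_const (T i)).exp).const_mul
      (1 / (N : ℝ))).log (glmPartition_pos hN 1 (u s)).ne'
  refine hlog.congr_deriv ?_
  rw [inner_glmM, ← Finset.sum_neg_distrib, Finset.mul_sum, Finset.sum_div]
  refine Finset.sum_congr rfl fun i _ => ?_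
  rw [glmWeight_eq_div hN, real_inner_comm (T i) u']
  ring

theorem hasDerivAt_glmWeight_one_comp (hN : 0 < N) (hu : HasDerivAt u u' s) (i : Fin N) :
    HasDerivAt (fun s => glmWeight T 1 (u s) i)
      (-(glmWeight T 1 (u s) i * ⟪T i - glmM T 1 (u s), u'⟫)) s := by
  have hexp : HasDerivAt (fun s => glmWeight T 1 (u s) i) _ s :=
    (((hu.neg_one_mul_inner_const (T i)).fun_sub (hasDerivAt_glmGamma_one_comp hN hu)).exp).const_mul
      (1 / (N : ℝ))
  refine hexp.congr_deriv ?_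
  rw [glmWeight, inner_sub_left, real_inner_comm (T i) u']
  ring

theorem hasDerivAt_glmM_one_comp (hN : 0 < N) (hu : HasDerivAt u u' s) :
    HasDerivAt (fun s => glmM T 1 (u s)) (-glmV T 1 (u s) u') s := by
  simp only [glmM_eq_sum, glmV_apply_eq_sum hN, ← Finset.sum_neg_distrib, ← neg_smul]
  exact HasDerivAt.fun_sum fun i _ => (hasDerivAt_glmWeight_one_comp hN hu i).smul_const (T i)

theorem hasDerivAt_glmGamma_comp (hN : 0 < N) (t : ℝ) (hc : HasDerivAt c c' s) :
    HasDerivAt (fun s => glmGamma T t (c s)) (-t * ⟪glmM T t (c s), c'⟫) s := by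
  simp only [glmGamma_eq_one_smul t, glmM_eq_one_smul t]
  have hu : HasDerivAt (fun s => t • c s) (t • c') s := hc.const_smul t
  refine (hasDerivAt_glmGamma_one_comp hN hu).congr_deriv ?_
  rw [real_inner_smul_right]
  ring

theorem hasDerivAt_glmM_along (hN : 0 < N) (hc : HasDerivAt c c' s) :
    HasDerivAt (fun s => glmM T s (c s)) (-glmV T s (c s) (c s + s • c')) s := by
  simp only [glmM_eq_one_smul _ (c _), glmV_eq_one_smul s]
  have hu : HasDerivAt (fun s => s • c s) (s • c' + (1 : ℝ) • c s) s := (hasDerivAt_id s).smul hc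
  refine (hasDerivAt_glmM_one_comp hN hu).congr_deriv ?_
  rw [one_smul, add_comm]

end Derivatives

section SolutionPath

variable {d N : ℕ} {T : Fin N → EuclideanSpace ℝ (Fin d)}

theorem continuous_glmWeight (hN : 0 < N) (θ : EuclideanSpace ℝ (Fin d)) (i : Fin N) :
    Continuous fun t => glmWeight T t θ i := by
  simp only [glmWeight_eq_one_smul _ θ]
  exact continuous_iff_continuousAt.2 fun t =>
    (hasDerivAt_glmWeight_one_comp hN ((hasDerivAt_id t).smul_const θ) i).continuousAt

theorem continuous_glmM (hN : 0 < N) (θ : EuclideanSpace ℝ (Fin d)) :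
    Continuous fun t => glmM T t θ :=
  continuous_iff_continuousAt.2 fun t =>
    (hasDerivAt_glmM_along hN (hasDerivAt_const t θ)).continuousAt

theorem integral_glmV_apply_self (hN : 0 < N) (θ : EuclideanSpace ℝ (Fin d)) (t τ : ℝ) :
    ∫ ν in t..τ, glmV T ν θ θ = glmM T t θ - glmM T τ θ := by
  have hderiv : ∀ ν, HasDerivAt (fun ν => glmM T ν θ) (-glmV T ν θ θ) ν := fun ν => by
    simpa using hasDerivAt_glmM_along (T := T) hN (hasDerivAt_const ν θ)
  have hcont : Continuous fun ν => glmV T ν θ θ := by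
    have := continuous_glmWeight (T := T) hN θ
    have := continuous_glmM (T := T) hN θ
    simp only [glmV_apply_eq_sum hN]
    fun_prop
  have hFTC :=
    integral_eq_sub_of_hasDerivAt (fun ν _ => hderiv ν) (hcont.neg.intervalIntegrable t τ)
  rw [intervalIntegral.integral_neg, neg_eq_iff_eq_neg] at hFTC
  rw [hFTC, neg_sub]

theorem glmTiltedLoss_eq (hN : 0 < N) {t : ℝ} (ht : t ≠ 0) (A : EuclideanSpace ℝ (Fin d) → ℝ)
    (θ : EuclideanSpace ℝ (Fin d)) : glmTiltedLoss T A t θ = A θ + glmGamma T t θ / t := by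
  have hfactor : (1 / (N : ℝ)) * ∑ i, Real.exp (t * (A θ - ⟪θ, T i⟫)) =
      Real.exp (t * A θ) * ((1 / (N : ℝ)) * ∑ i, Real.exp (-t * ⟪θ, T i⟫)) := by
    rw [Finset.mul_sum, Finset.mul_sum, Finset.mul_sum]
    exact Finset.sum_congr rfl fun i _ => by rw [mul_left_comm, ← Real.exp_add]; ring_nf
  rw [glmTiltedLoss, hfactor, Real.log_mul (Real.exp_pos _).ne' (glmPartition_pos hN t θ).ne',
    Real.log_exp, glmGamma]
  field_simp

theorem hasDerivAt_glmTiltedLoss_comp (hN : 0 < N) {t : ℝ} (ht : t ≠ 0)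
    {A : EuclideanSpace ℝ (Fin d) → ℝ} {c : ℝ → EuclideanSpace ℝ (Fin d)}
    {c' : EuclideanSpace ℝ (Fin d)} {s : ℝ} (hA : DifferentiableAt ℝ A (c s))
    (hc : HasDerivAt c c' s) :
    HasDerivAt (fun s => glmTiltedLoss T A t (c s)) ⟪gradient A (c s) - glmM T t (c s), c'⟫ s := by
  simp only [glmTiltedLoss_eq hN ht]
  refine ((hA.hasGradientAt.hasFDerivAt.comp_hasDerivAt s hc).add
    ((hasDerivAt_glmGamma_comp hN t hc).div_const t)).congr_deriv ?_
  rw [inner_sub_left]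
  simp only [toDual_gradient, neg_mul, inner_gradient_left]
  field_simp
  ring

theorem fderiv_gradient_add_smul_glmV_apply_deriv (hN : 0 < N)
    {A : EuclideanSpace ℝ (Fin d) → ℝ} {θ : ℝ → EuclideanSpace ℝ (Fin d)} {τ : ℝ}
    (hA : DifferentiableAt ℝ (gradient A) (θ τ)) (hθ : DifferentiableAt ℝ θ τ)
    (hstat : ∀ s, gradient A (θ s) = glmM T s (θ s)) :
    (fderiv ℝ (gradient A) (θ τ) + τ • glmV T τ (θ τ)) (deriv θ τ) = -glmV T τ (θ τ) (θ τ) := by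
  have hgrad :
      HasDerivAt (fun s => glmM T s (θ s)) (fderiv ℝ (gradient A) (θ τ) (deriv θ τ)) τ := by
    rw [← funext hstat]
    exact hA.hasFDerivAt.comp_hasDerivAt τ hθ.hasDerivAt
  rw [add_apply, hgrad.unique (hasDerivAt_glmM_along hN hθ.hasDerivAt), map_add, map_smul]
  simp only [neg_add_rev, smul_apply, neg_add_cancel_comm]

theorem deriv_glmTiltedLoss_of_stationary (hN : 0 < N) {t : ℝ} (ht : t ≠ 0)
    {A : EuclideanSpace ℝ (Fin d) → ℝ} {θ : ℝ → EuclideanSpace ℝ (Fin d)} {τ : ℝ}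
    (hA : DifferentiableAt ℝ A (θ τ)) (hθ : DifferentiableAt ℝ θ τ)
    (hstat : gradient A (θ τ) = glmM T τ (θ τ)) :
    deriv (fun s => glmTiltedLoss T A t (θ s)) τ =
      -⟪∫ ν in t..τ, glmV T ν (θ τ) (θ τ), deriv θ τ⟫ := by
  rw [(hasDerivAt_glmTiltedLoss_comp hN ht hA hθ.hasDerivAt).deriv, hstat,
    integral_glmV_apply_self hN, ← inner_neg_left, neg_sub]

end SolutionPath

/-- **Derivative of the tilted loss along the solution path.** In the GLM setting, let
`θ̆ : ℝ → ℝ^d` be a differentiable curve of stationary solutions (`∇A(θ̆(τ)) = M(τ;θ̆(τ))`)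
with `H(τ) = ∇²A(θ̆(τ)) + τ·V(τ;θ̆(τ))` two-sidedly invertible. Then for every `t ≠ 0` and
every `τ`,
`d/dτ R̃(t;θ̆(τ)) = θ̆(τ)ᵀ·V(τ;θ̆(τ))·H(τ)⁻¹·(∫_t^τ V(ν;θ̆(τ)) dν)·θ̆(τ)`;
in particular this derivative vanishes at `τ = t`. -/
theorem glm_tilted_loss_along_solution_path {d N : ℕ} (hN : 0 < N)
    (T : Fin N → EuclideanSpace ℝ (Fin d))
    (A : EuclideanSpace ℝ (Fin d) → ℝ) (hA : ContDiff ℝ 2 A)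
    (θbreve : ℝ → EuclideanSpace ℝ (Fin d)) (hθ : Differentiable ℝ θbreve)
    (hstat : ∀ τ : ℝ, gradient A (θbreve τ) = glmM T τ (θbreve τ))
    (H Hinv : ℝ → EuclideanSpace ℝ (Fin d) →L[ℝ] EuclideanSpace ℝ (Fin d))
    (hH : ∀ τ : ℝ, H τ = fderiv ℝ (gradient A) (θbreve τ) + τ • glmV T τ (θbreve τ))
    (hHinv : ∀ τ : ℝ,
      (H τ).comp (Hinv τ) = ContinuousLinearMap.id ℝ (EuclideanSpace ℝ (Fin d)) ∧
      (Hinv τ).comp (H τ) = ContinuousLinearMap.id ℝ (EuclideanSpace ℝ (Fin d)))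
    (t : ℝ) (ht : t ≠ 0) :
    (∀ τ : ℝ, deriv (fun s => glmTiltedLoss T A t (θbreve s)) τ =
      (inner ℝ (θbreve τ)
        (glmV T τ (θbreve τ)
          (Hinv τ (∫ ν in t..τ, glmV T ν (θbreve τ) (θbreve τ)))) : ℝ)) ∧
    deriv (fun s => glmTiltedLoss T A t (θbreve s)) t = 0 := by
  have hderiv : ∀ τ, deriv (fun s => glmTiltedLoss T A t (θbreve s)) τ =
      ⟪θbreve τ, glmV T τ (θbreve τ) (Hinv τ (∫ ν in t..τ, glmV T ν (θbreve τ) (θbreve τ)))⟫ := by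
    intro τ
    have hA₂ : ContDiffAt ℝ 2 A (θbreve τ) := hA.contDiffAt
    have hHsymm : (H τ).toLinearMap.IsSymmetric := by
      rw [hH τ]
      exact (isSymmetric_fderiv_gradient hA₂).add ((isSymmetric_glmV (T := T) τ _).smul rfl)
    have hHinv_symm : (Hinv τ).toLinearMap.IsSymmetric :=
      hHsymm.of_rightInverse fun v => congrArg (· v) (hHinv τ).1
    have hHp : H τ (deriv θbreve τ) = -glmV T τ (θbreve τ) (θbreve τ) := by
      rw [hH τ]
      exact fderiv_gradient_add_smul_glmV_apply_deriv hN hA₂.differentiableAt_gradient (hθ τ) hstat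
    have hpath : deriv θbreve τ = -Hinv τ (glmV T τ (θbreve τ) (θbreve τ)) := by
      rw [← map_neg, ← hHp]
      exact (congrArg (· (deriv θbreve τ)) (hHinv τ).2).symm
    rw [deriv_glmTiltedLoss_of_stationary hN ht (hA.differentiable two_ne_zero _) (hθ τ) (hstat τ),
      hpath, inner_neg_right, neg_neg, ← hHinv_symm.apply_clm,
      ← (isSymmetric_glmV (T := T) τ _).apply_clm, real_inner_comm]
  exact ⟨hderiv, by rw [hderiv t, integral_same, map_zero, map_zero, inner_zero_right]⟩
end
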